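/- Let $\Gamma \geq \eta \geq 1$, let $k > k_{un} \geq 0$ and $\mu$ be integers with $\mu \geq k + \lceil (\Gamma-\eta+1)(k_{un}+1)/\Gamma \rceil$. Then $\eta(\mu-k) + (\Gamma-\eta)(\mu-k_{un}) \geq (k_{un}+1)(\Gamma-\eta+1)$. -/

import Mathlib

/-! With `c = ⌈(Γ-η+1)(kun+1)/Γ⌉`, the USI cost rewrites as `Γ(μ-k) + (Γ-η)(k-kun)`, which is at
least `Γ c ≥ (Γ-η+1)(kun+1)`. -/

theorem le_mul_ceil_div {K : Type*} [Field K] [LinearOrder K] [IsStrictOrderedRing K]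
    [FloorRing K] (a : K) {b : K} (hb : 0 < b) : a ≤ b * ⌈a / b⌉ :=
  (div_le_iff₀' hb).1 (Int.le_ceil _)

theorem mul_le_usi_cost (Γ η k kun μ c : ℤ) (hΓ : 0 ≤ Γ) (hηΓ : η ≤ Γ) (hk : kun ≤ k)
    (hμ : k + c ≤ μ) : Γ * c ≤ η * (μ - k) + (Γ - η) * (μ - kun) :=
  calc Γ * c ≤ Γ * (μ - k) := mul_le_mul_of_nonneg_left (by linarith) hΓ
    _ ≤ Γ * (μ - k) + (Γ - η) * (k - kun) := le_add_of_nonneg_right (mul_nonneg (by linarith) (by linarith))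
    _ = η * (μ - k) + (Γ - η) * (μ - kun) := by ring

/-- Theorem 3 of the paper: if `Γ ≥ η ≥ 1`, `k > kun ≥ 0`, and
`μ ≥ k + ⌈(Γ-η+1)(kun+1)/Γ⌉`, then
`η(μ-k) + (Γ-η)(μ-kun) ≥ (kun+1)(Γ-η+1)`. -/
theorem isi_beats_usi_case2 (Γ η k kun μ : ℕ) (hη : 1 ≤ η) (hΓ : η ≤ Γ)
    (hk : kun < k)
    (hμ : (μ : ℤ) ≥ (k : ℤ) + ⌈((((Γ : ℚ) - η + 1) * (kun + 1)) / Γ : ℚ)⌉) :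
    (η : ℤ) * ((μ : ℤ) - k) + ((Γ : ℤ) - η) * ((μ : ℤ) - kun)
      ≥ ((kun : ℤ) + 1) * ((Γ : ℤ) - η + 1) := by
  set c : ℤ := ⌈((((Γ : ℚ) - η + 1) * (kun + 1)) / Γ : ℚ)⌉
  have hΓpos : (0 : ℚ) < Γ := by exact_mod_cast hη.trans hΓ
  have hc : ((Γ : ℤ) - η + 1) * (kun + 1) ≤ Γ * c := by
    have h := le_mul_ceil_div (((Γ : ℚ) - η + 1) * (kun + 1)) hΓpos
    rw [← Int.cast_le (R := ℚ)]
    push_cast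
    exact h
  have hcost := mul_le_usi_cost Γ η k kun μ c (by positivity) (by exact_mod_cast hΓ)
    (by exact_mod_cast hk.le) hμ
  linarith
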